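/- arXiv:2302.06858 — 2 statements merged into one kernel-verified Lean document; each statement's English description precedes it below -/
import Mathlib

section
/- Consider the N-qubit variational quantum eigensolver cost with the warm-up Hamiltonian H = Σ_{j=1}^{N−1} Z_j Z_{j+1}. For every N ≥ 2, L ≥ 1, every choice of entangling-layer pair sets, every hyperparameter a ∈ (0,1), and every index q ∈ {1,…,2L}, n ∈ {1,…,N}, the expectation (over parameters θ_{q,n} i.i.d. uniform on [−aπ, aπ]) of the partial derivative of the cost vanishes: E_θ ∂C/∂θ_{q,n} = 0. -/
open MeasureTheory Matrix BigOperators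

noncomputable section

/-- The space of linear operators on `N` qubits, indexed by bit strings. -/
abbrev QOp (N : ℕ) := Matrix (Fin N → Fin 2) (Fin N → Fin 2) ℂ

/-- Pauli `X`. -/
def pauliX : Matrix (Fin 2) (Fin 2) ℂ := !![0, 1; 1, 0]
/-- Pauli `Y`. -/
def pauliY : Matrix (Fin 2) (Fin 2) ℂ := !![0, -Complex.I; Complex.I, 0]
/-- Pauli `Z`. -/
def pauliZ : Matrix (Fin 2) (Fin 2) ℂ := !![1, 0; 0, -1]

/-- `σ_0 = I, σ_1 = X, σ_2 = Y, σ_3 = Z`. -/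
def pauli : Fin 4 → Matrix (Fin 2) (Fin 2) ℂ := ![1, pauliX, pauliY, pauliZ]

/-- Tensor product over all `N` qubits of single-qubit operators. -/
def tensorProd {N : ℕ} (f : Fin N → Matrix (Fin 2) (Fin 2) ℂ) : QOp N :=
  fun x y => ∏ n, f n (x n) (y n)

/-- The Pauli string `σ_{i_1} ⊗ ⋯ ⊗ σ_{i_N}`. -/
def pauliString {N : ℕ} (i : Fin N → Fin 4) : QOp N :=
  tensorProd fun n => pauli (i n)

open scoped Classical in
/-- Controlled-Z entangling layer corresponding to a set `E` of unordered pairs of qubits: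
the diagonal unitary multiplying `|x⟩` by `(-1)^{|{{i,j} ∈ E : x_i = x_j = 1}|}`. -/
def czLayer {N : ℕ} (E : Finset (Sym2 (Fin N))) : QOp N :=
  Matrix.diagonal fun x => (-1 : ℂ) ^ (E.filter fun p => ∀ i ∈ p, x i = 1).card

/-- The single-qubit rotation `exp(-i t σ / 2)` (matrix exponential). -/
def rot (σ : Matrix (Fin 2) (Fin 2) ℂ) (t : ℝ) : Matrix (Fin 2) (Fin 2) ℂ :=
  NormedSpace.exp ((-(t : ℂ) * Complex.I / 2) • σ)

/-- The `l`-th block `R_{2l} R_{2l-1} CZ_l` of the parameterized circuit: a `CZ` layer,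
an `R_X` rotation layer with angles `θ_{2l-1,·}` and an `R_Y` layer with angles `θ_{2l,·}`. -/
def pqcBlock {N L : ℕ} (E : Fin L → Finset (Sym2 (Fin N)))
    (θ : Fin (2 * L) × Fin N → ℝ) (l : Fin L) : QOp N :=
  tensorProd (fun n => rot pauliY (θ (⟨2 * l.val + 1, by have := l.isLt; omega⟩, n))) *
    tensorProd (fun n => rot pauliX (θ (⟨2 * l.val, by have := l.isLt; omega⟩, n))) *
      czLayer (E l)

/-- The circuit unitary `U(θ) = [R_{2L} R_{2L-1} CZ_L] ⋯ [R_2 R_1 CZ_1]`. -/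
def pqcCircuit {N L : ℕ} (E : Fin L → Finset (Sym2 (Fin N)))
    (θ : Fin (2 * L) × Fin N → ℝ) : QOp N :=
  ((List.ofFn fun l : Fin L => pqcBlock E θ l).reverse).prod

/-- The input state `ρ_0 = (|0⟩⟨0|)^{⊗N}`. -/
def allZeroState (N : ℕ) : QOp N :=
  Matrix.single (fun _ => 0) (fun _ => 0) 1

/-- The VQE cost `C(θ) = Tr[H U(θ) ρ_0 U(θ)†]` (a real number). -/
def cost {N L : ℕ} (H : QOp N) (E : Fin L → Finset (Sym2 (Fin N)))
    (θ : Fin (2 * L) × Fin N → ℝ) : ℝ :=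
  (Matrix.trace (H * pqcCircuit E θ * allZeroState N * (pqcCircuit E θ)ᴴ)).re

/-- Partial derivative of `f : (ι → ℝ) → ℝ` in the `i`-th coordinate at `θ`. -/
def pderiv {ι : Type*} [DecidableEq ι] (f : (ι → ℝ) → ℝ) (i : ι) (θ : ι → ℝ) : ℝ :=
  deriv (fun t => f (Function.update θ i t)) (θ i)

/-- Squared Euclidean norm of the gradient of `f` at `θ`. -/
def gradNormSq {ι : Type*} [Fintype ι] [DecidableEq ι] (f : (ι → ℝ) → ℝ) (θ : ι → ℝ) : ℝ :=
  ∑ i, (pderiv f i θ) ^ 2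

/-- Expectation of `f` when all coordinates are i.i.d. uniform on `[-aπ, aπ]`. -/
def uniformExp {ι : Type*} [Fintype ι] (a : ℝ) (f : (ι → ℝ) → ℝ) : ℝ :=
  (1 / (2 * a * Real.pi)) ^ (Fintype.card ι) *
    ∫ θ in Set.univ.pi fun _ : ι => Set.Icc (-(a * Real.pi)) (a * Real.pi), f θ

/-- Variance of `f` when all coordinates are i.i.d. uniform on `[-aπ, aπ]`. -/
def uniformVar {ι : Type*} [Fintype ι] (a : ℝ) (f : (ι → ℝ) → ℝ) : ℝ :=
  uniformExp a fun θ => (f θ - uniformExp a f) ^ 2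

/-- The warm-up Hamiltonian `H = Σ_{j=1}^{N-1} Z_j Z_{j+1}`. -/
def warmupH (N : ℕ) : QOp N :=
  ∑ j ∈ Finset.range (N - 1),
    pauliString fun n : Fin N => if n.val = j ∨ n.val = j + 1 then 3 else 0

/-- The number of qubits on which the Pauli string indexed by `i` acts non-trivially. -/
def locality {N : ℕ} (i : Fin N → Fin 4) : ℕ :=
  (Finset.univ.filter fun n => i n ≠ 0).card



namespace Stmt4Aux

lemma tensorProd_mul {N : ℕ} (f g : Fin N → Matrix (Fin 2) (Fin 2) ℂ) :
    tensorProd (fun n => f n * g n) = tensorProd f * tensorProd g := by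
  ext x y
  simp only [tensorProd, Matrix.mul_apply]
  rw [Finset.prod_univ_sum, Fintype.piFinset_univ]
  exact Finset.sum_congr rfl fun p _ => Finset.prod_mul_distrib

lemma tensorProd_diagonal {N : ℕ} (f : Fin N → Matrix (Fin 2) (Fin 2) ℂ)
    (h : ∀ n, ∀ a b : Fin 2, a ≠ b → f n a b = 0) :
    tensorProd f = Matrix.diagonal fun x => ∏ n, f n (x n) (x n) := by
  ext x y
  rcases eq_or_ne x y with rfl | hxy
  · simp [tensorProd, Matrix.diagonal_apply_eq]
  · rw [Matrix.diagonal_apply_ne _ hxy]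
    obtain ⟨n, hn⟩ := Function.ne_iff.mp hxy
    exact Finset.prod_eq_zero (Finset.mem_univ n) (h n _ _ hn)

lemma pauliZ_offdiag : ∀ a b : Fin 2, a ≠ b → pauliZ a b = 0 := by
  intro a b h
  fin_cases a <;> fin_cases b <;> simp_all [pauliZ]

lemma pauliZ_mul_self : pauliZ * pauliZ = 1 := by
  ext i j
  fin_cases i <;> fin_cases j <;>
    simp [pauliZ, Matrix.mul_apply, Fin.sum_univ_two, Matrix.one_apply]

/-- `Z ⊗ ⋯ ⊗ Z`. -/
def Zd (N : ℕ) : QOp N := tensorProd fun _ => pauliZ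

lemma Zd_diag (N : ℕ) :
    Zd N = Matrix.diagonal fun x => ∏ n, pauliZ (x n) (x n) :=
  tensorProd_diagonal _ (fun _ => pauliZ_offdiag)

lemma tensorProd_one {N : ℕ} :
    tensorProd (fun _ : Fin N => (1 : Matrix (Fin 2) (Fin 2) ℂ)) = 1 := by
  rw [tensorProd_diagonal _ (fun _ _ _ h => Matrix.one_apply_ne h)]
  have : (fun x : Fin N → Fin 2 =>
      ∏ n, (1 : Matrix (Fin 2) (Fin 2) ℂ) (x n) (x n)) = fun _ => 1 := by
    funext x; simp [Matrix.one_apply_eq]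
  rw [this, Matrix.diagonal_one]

lemma Zd_mul_Zd (N : ℕ) : Zd N * Zd N = 1 := by
  rw [Zd, ← tensorProd_mul]
  simp only [pauliZ_mul_self]
  exact tensorProd_one

lemma Zd_conjTranspose (N : ℕ) : (Zd N)ᴴ = Zd N := by
  rw [Zd_diag, Matrix.diagonal_conjTranspose]
  refine congrArg Matrix.diagonal (funext fun x => ?_)
  show star (∏ n, pauliZ (x n) (x n)) = ∏ n, pauliZ (x n) (x n)
  rw [star_prod]
  refine Finset.prod_congr rfl fun n _ => ?_
  have : ∀ i : Fin 2, star (pauliZ i i) = pauliZ i i := by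
    intro i; fin_cases i <;> simp [pauliZ]
  exact this _

lemma Zd_comm_diagonal {N : ℕ} (d : (Fin N → Fin 2) → ℂ) :
    Zd N * Matrix.diagonal d = Matrix.diagonal d * Zd N := by
  rw [Zd_diag, Matrix.diagonal_mul_diagonal, Matrix.diagonal_mul_diagonal]
  exact congrArg Matrix.diagonal (mul_comm _ _)

lemma Zd_conj_diagonal {N : ℕ} (d : (Fin N → Fin 2) → ℂ) :
    Zd N * Matrix.diagonal d * Zd N = Matrix.diagonal d := by
  rw [Zd_comm_diagonal, mul_assoc, Zd_mul_Zd, mul_one]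

lemma Zd_conj_zero (N : ℕ) : Zd N * allZeroState N * Zd N = allZeroState N := by
  ext x y
  rw [Zd_diag]
  simp only [allZeroState, Matrix.diagonal_mul, Matrix.mul_diagonal,
    Matrix.single, Matrix.of_apply]
  split_ifs with h
  · obtain ⟨rfl, rfl⟩ := h
    simp [pauliZ]
  · ring

lemma pauliString_diagonal {N : ℕ} (i : Fin N → Fin 4) (h : ∀ n, i n = 0 ∨ i n = 3) :
    ∃ d, pauliString i = Matrix.diagonal d := by
  refine ⟨_, tensorProd_diagonal _ fun n a b hab => ?_⟩
  rcases h n with h0 | h3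
  · rw [h0]
    exact Matrix.one_apply_ne hab
  · rw [h3]
    exact pauliZ_offdiag a b hab

lemma Zd_conj_warmupH (N : ℕ) : Zd N * warmupH N * Zd N = warmupH N := by
  unfold warmupH
  rw [Finset.mul_sum, Finset.sum_mul]
  refine Finset.sum_congr rfl fun j _ => ?_
  obtain ⟨d, hd⟩ := pauliString_diagonal
    (fun n : Fin N => if n.val = j ∨ n.val = j + 1 then (3 : Fin 4) else 0)
    (fun n => by split <;> simp)
  rw [hd, Zd_conj_diagonal]

lemma Z_isUnit : IsUnit pauliZ :=
  ⟨⟨pauliZ, pauliZ, pauliZ_mul_self, pauliZ_mul_self⟩, rfl⟩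

lemma Z_inv : pauliZ⁻¹ = pauliZ := Matrix.inv_eq_right_inv pauliZ_mul_self

lemma Z_conj_X : pauliZ * pauliX * pauliZ = -pauliX := by
  ext i j
  fin_cases i <;> fin_cases j <;>
    simp [pauliZ, pauliX, Matrix.mul_apply, Fin.sum_univ_two]

lemma Z_conj_Y : pauliZ * pauliY * pauliZ = -pauliY := by
  ext i j
  fin_cases i <;> fin_cases j <;>
    simp [pauliZ, pauliY, Matrix.mul_apply, Fin.sum_univ_two]

lemma rot_neg_conj {σ : Matrix (Fin 2) (Fin 2) ℂ} (h : pauliZ * σ * pauliZ = -σ) (t : ℝ) :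
    rot σ (-t) = pauliZ * rot σ t * pauliZ := by
  unfold rot
  have h2 : ((-((-t : ℝ) : ℂ)) * Complex.I / 2) • σ =
      pauliZ * (((-(t : ℂ)) * Complex.I / 2) • σ) * pauliZ⁻¹ := by
    rw [Z_inv, Matrix.mul_smul, Matrix.smul_mul, h, smul_neg, ← neg_smul]
    congr 1
    push_cast
    ring
  rw [h2, Matrix.exp_conj _ _ Z_isUnit, Z_inv]

lemma Zd_conj_tensor_rot {N : ℕ} {σ : Matrix (Fin 2) (Fin 2) ℂ}
    (h : pauliZ * σ * pauliZ = -σ) (f : Fin N → ℝ) :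
    tensorProd (fun n => rot σ (-(f n))) = Zd N * tensorProd (fun n => rot σ (f n)) * Zd N := by
  have e1 : (fun n : Fin N => rot σ (-(f n))) =
      fun n => pauliZ * rot σ (f n) * pauliZ := funext fun n => rot_neg_conj h _
  rw [e1, tensorProd_mul (fun n => pauliZ * rot σ (f n)) (fun _ => pauliZ),
    tensorProd_mul (fun _ => pauliZ) (fun n => rot σ (f n))]
  rfl

lemma conj_mul_conj {N : ℕ} (A B : QOp N) :
    (Zd N * A * Zd N) * (Zd N * B * Zd N) = Zd N * (A * B) * Zd N := by
  have ZZ : ∀ M : QOp N, Zd N * (Zd N * M) = M := fun M => by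
    rw [← mul_assoc, Zd_mul_Zd, one_mul]
  simp only [mul_assoc]
  rw [ZZ]

lemma Zd_comm_cz {N : ℕ} (E : Finset (Sym2 (Fin N))) :
    Zd N * czLayer E = czLayer E * Zd N := by
  unfold czLayer
  exact Zd_comm_diagonal _

lemma pqcBlock_neg {N L : ℕ} (E : Fin L → Finset (Sym2 (Fin N)))
    (θ : Fin (2 * L) × Fin N → ℝ) (l : Fin L) :
    pqcBlock E (-θ) l = Zd N * pqcBlock E θ l * Zd N := by
  unfold pqcBlock
  simp only [Pi.neg_apply]
  rw [Zd_conj_tensor_rot Z_conj_Y (fun n => θ (⟨2 * l.val + 1, by have := l.isLt; omega⟩, n)),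
    Zd_conj_tensor_rot Z_conj_X (fun n => θ (⟨2 * l.val, by have := l.isLt; omega⟩, n)),
    conj_mul_conj]
  have ZZ : ∀ M : QOp N, Zd N * (Zd N * M) = M := fun M => by
    rw [← mul_assoc, Zd_mul_Zd, one_mul]
  simp only [mul_assoc]
  rw [Zd_comm_cz]

lemma list_conj_prod {N : ℕ} : ∀ ms : List (QOp N),
    (ms.map fun M => Zd N * M * Zd N).prod = Zd N * ms.prod * Zd N
  | [] => by
    simp only [List.map_nil, List.prod_nil, mul_one, Zd_mul_Zd]
  | m :: ms => by
    simp only [List.map_cons, List.prod_cons, list_conj_prod ms, conj_mul_conj]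

lemma pqcCircuit_neg {N L : ℕ} (E : Fin L → Finset (Sym2 (Fin N)))
    (θ : Fin (2 * L) × Fin N → ℝ) :
    pqcCircuit E (-θ) = Zd N * pqcCircuit E θ * Zd N := by
  unfold pqcCircuit
  have e1 : (List.ofFn fun l : Fin L => pqcBlock E (-θ) l) =
      (List.ofFn fun l : Fin L => pqcBlock E θ l).map fun M => Zd N * M * Zd N := by
    rw [List.map_ofFn]
    exact congrArg _ (funext fun l => pqcBlock_neg E θ l)
  rw [e1, ← List.map_reverse, list_conj_prod]

lemma trace_conj {N : ℕ} (U : QOp N) :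
    Matrix.trace (warmupH N * (Zd N * U * Zd N) * allZeroState N * (Zd N * U * Zd N)ᴴ)
      = Matrix.trace (warmupH N * U * allZeroState N * Uᴴ) := by
  have hherm : (Zd N * U * Zd N)ᴴ = Zd N * Uᴴ * Zd N := by
    rw [Matrix.conjTranspose_mul, Matrix.conjTranspose_mul, Zd_conjTranspose]
    simp only [mul_assoc]
  rw [hherm]
  have h1' : ∀ M : QOp N, Zd N * (allZeroState N * (Zd N * M)) = allZeroState N * M :=
    fun M => by rw [← mul_assoc, ← mul_assoc, Zd_conj_zero]
  have key : warmupH N * (Zd N * U * Zd N) * allZeroState N * (Zd N * Uᴴ * Zd N)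
      = warmupH N * Zd N * (U * (allZeroState N * Uᴴ)) * Zd N := by
    simp only [mul_assoc]
    rw [h1']
  rw [key, Matrix.trace_mul_cycle]
  have h2' : Zd N * (warmupH N * Zd N) = warmupH N := by
    rw [← mul_assoc, Zd_conj_warmupH]
  rw [h2']
  simp only [mul_assoc]

lemma cost_neg {N L : ℕ} (E : Fin L → Finset (Sym2 (Fin N)))
    (θ : Fin (2 * L) × Fin N → ℝ) :
    cost (warmupH N) E (-θ) = cost (warmupH N) E θ := by
  unfold cost
  rw [pqcCircuit_neg]
  exact congrArg Complex.re (trace_conj _)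

lemma pderiv_cost_odd {N L : ℕ} (E : Fin L → Finset (Sym2 (Fin N)))
    (i : Fin (2 * L) × Fin N) (θ : Fin (2 * L) × Fin N → ℝ) :
    pderiv (cost (warmupH N) E) i (-θ) = -pderiv (cost (warmupH N) E) i θ := by
  unfold pderiv
  have hfun : (fun t => cost (warmupH N) E (Function.update (-θ) i t)) =
      fun t => cost (warmupH N) E (Function.update θ i (-t)) := by
    funext t
    rw [← cost_neg E (Function.update θ i (-t))]
    congr 1
    funext j
    rcases eq_or_ne j i with rfl | h
    · simp
    · simp [Function.update_of_ne h]
  rw [hfun]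
  have : ((-θ) i) = -(θ i) := rfl
  rw [this]
  exact (deriv_comp_neg (fun s => cost (warmupH N) E (Function.update θ i s)) (-θ i)).trans
    (by rw [neg_neg])

end Stmt4Aux

lemma integral_box_odd {ι : Type*} [Fintype ι] (b : ℝ) (f : (ι → ℝ) → ℝ)
    (hf : ∀ θ, f (-θ) = -f θ) :
    ∫ θ in Set.univ.pi fun _ : ι => Set.Icc (-b) b, f θ = 0 := by
  set S : Set (ι → ℝ) := Set.univ.pi fun _ => Set.Icc (-b) b with hSdef
  have hpre : (Neg.neg : (ι → ℝ) → (ι → ℝ)) ⁻¹' S = S := by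
    ext θ
    simp only [Set.mem_preimage, hSdef, Set.mem_pi, Set.mem_univ, Set.mem_Icc,
      Pi.neg_apply, true_implies]
    constructor <;> intro h i <;> obtain ⟨h1, h2⟩ := h i <;> exact ⟨by linarith, by linarith⟩
  let e : (ι → ℝ) ≃ᵐ (ι → ℝ) := MeasurableEquiv.neg (ι → ℝ)
  have hcoe : ⇑e = (Neg.neg : (ι → ℝ) → (ι → ℝ)) := rfl
  have hmap : (volume.restrict S).map e = volume.restrict S := by
    have h1 : ((volume : Measure (ι → ℝ)).map e).restrict S = (volume.restrict (e ⁻¹' S)).map e :=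
      MeasurableEquiv.restrict_map e volume S
    have h2 : (volume : Measure (ι → ℝ)).map e = volume := by
      rw [hcoe]; exact Measure.map_neg_eq_self (volume : Measure (ι → ℝ))
    rw [h2, hcoe, hpre] at h1
    exact h1.symm
  have h3 : ∫ θ in S, f θ = ∫ θ in S, f (-θ) := by
    conv_lhs => rw [← hmap]
    rw [MeasureTheory.integral_map_equiv]
    simp only [hcoe]
  have h4 : ∫ θ in S, f (-θ) = -∫ θ in S, f θ := by
    simp only [hf]; exact integral_neg _
  linarith [h3.trans h4]

/-- for the warm-up Hamiltonian, the expectation of every partial derivative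
of the cost vanishes. -/
theorem statement4 (N L : ℕ) (hN : 2 ≤ N) (hL : 1 ≤ L)
    (E : Fin L → Finset (Sym2 (Fin N))) (a : ℝ) (ha : a ∈ Set.Ioo (0 : ℝ) 1)
    (q : Fin (2 * L)) (n : Fin N) :
    uniformExp a (pderiv (cost (warmupH N) E) (q, n)) = 0 := by
  unfold uniformExp
  rw [integral_box_odd (a * Real.pi) _ (fun θ => Stmt4Aux.pderiv_cost_odd E (q, n) θ), mul_zero]

end
end

section
/- For every integer S ≥ 1, the sequence L ↦ ((2SL − 1)/(S(2L + 1)))^{2SL−1}, defined for integers L ≥ 1, is monotonically decreasing in L and converges to e^{−(S+1)} as L → ∞; in particular, ((2SL − 1)/(S(2L + 1)))^{2SL−1} ≥ e^{−(S+1)} for all integers L ≥ 1, where e is the natural constant. -/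
open Real Filter

-- (1 + c/m)^m is monotone in m for m ≥ 1
lemma mono_aux (c : ℝ) (hc : 0 < c) {m n : ℕ} (hm : 1 ≤ m) (hmn : m ≤ n) :
    (1 + c / (m : ℝ)) ^ m ≤ (1 + c / (n : ℝ)) ^ n := by
  have hx : (0:ℝ) < m := by exact_mod_cast hm
  have hy : (0:ℝ) < n := by exact_mod_cast hm.trans hmn
  have hxy : (m:ℝ) ≤ n := by exact_mod_cast hmn
  have hb : (0:ℝ) ≤ 1 + c / n := by positivity
  have key : 1 + c / (m:ℝ) ≤ (1 + c / n) ^ ((n:ℝ) / m) := by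
    have := one_add_mul_self_le_rpow_one_add (s := c / n)
      (by linarith [div_nonneg hc.le hy.le]) (p := (n:ℝ)/m) ((one_le_div hx).2 hxy)
    calc 1 + c / (m:ℝ) = 1 + ((n:ℝ)/m) * (c / n) := by
          field_simp
      _ ≤ _ := this
  calc (1 + c / (m:ℝ)) ^ m = (1 + c / (m:ℝ)) ^ (m:ℝ) := (rpow_natCast _ m).symm
    _ ≤ ((1 + c / (n:ℝ)) ^ ((n:ℝ)/m)) ^ (m:ℝ) := by
        apply rpow_le_rpow (by positivity) key hx.le
    _ = (1 + c / (n:ℝ)) ^ (n:ℝ) := by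
        rw [← rpow_mul hb]
        congr 1; field_simp
    _ = (1 + c / (n:ℝ)) ^ n := rpow_natCast _ n

/-- for every integer `S ≥ 1`, the sequence
`L ↦ ((2SL - 1)/(S(2L + 1)))^{2SL-1}` (for integers `L ≥ 1`) is monotonically decreasing,
converges to `e^{-(S+1)}`, and in particular is bounded below by `e^{-(S+1)}`. -/
theorem statement19 (S : ℕ) (hS : 1 ≤ S) :
    (∀ L : ℕ, 1 ≤ L →
        ((2 * (S : ℝ) * ((L : ℝ) + 1) - 1) / ((S : ℝ) * (2 * ((L : ℝ) + 1) + 1))) ^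
            (2 * S * (L + 1) - 1) ≤
          ((2 * (S : ℝ) * (L : ℝ) - 1) / ((S : ℝ) * (2 * (L : ℝ) + 1))) ^ (2 * S * L - 1)) ∧
    Filter.Tendsto
      (fun L : ℕ =>
        ((2 * (S : ℝ) * (L : ℝ) - 1) / ((S : ℝ) * (2 * (L : ℝ) + 1))) ^ (2 * S * L - 1))
      Filter.atTop (nhds (Real.exp (-((S : ℝ) + 1)))) ∧
    (∀ L : ℕ, 1 ≤ L →
        Real.exp (-((S : ℝ) + 1)) ≤
          ((2 * (S : ℝ) * (L : ℝ) - 1) / ((S : ℝ) * (2 * (L : ℝ) + 1))) ^ (2 * S * L - 1)) := by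
  set c : ℝ := (S : ℝ) + 1 with hc_def
  have hc : 0 < c := by positivity
  set f : ℕ → ℝ := fun L =>
    ((2 * (S : ℝ) * (L : ℝ) - 1) / ((S : ℝ) * (2 * (L : ℝ) + 1))) ^ (2 * S * L - 1) with hf
  have hSL : ∀ L : ℕ, 1 ≤ L → 1 ≤ 2 * S * L := fun L hL =>
    Nat.one_le_iff_ne_zero.2 (by positivity)
  -- key rewriting
  have key : ∀ L : ℕ, 1 ≤ L →
      f L = ((1 + c / ((2 * S * L - 1 : ℕ) : ℝ)) ^ (2 * S * L - 1))⁻¹ := by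
    intro L hL
    have h1 := hSL L hL
    have hm : ((2 * S * L - 1 : ℕ) : ℝ) = 2 * (S : ℝ) * L - 1 := by
      push_cast [Nat.cast_sub h1]
      ring
    have hLpos : (1:ℝ) ≤ L := by exact_mod_cast hL
    have hSpos : (1:ℝ) ≤ S := by exact_mod_cast hS
    have hpos : (0:ℝ) < 2 * (S:ℝ) * L - 1 := by nlinarith
    have hbase : (2 * (S : ℝ) * L - 1) / ((S : ℝ) * (2 * L + 1))
        = (1 + c / ((2 * S * L - 1 : ℕ) : ℝ))⁻¹ := by
      rw [hm, hc_def]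
      have hd : (S:ℝ) * (2 * L + 1) ≠ 0 := by positivity
      field_simp
      ring
    rw [hf]
    simp only [hbase, inv_pow]
  -- part 1: monotone decreasing
  have part1 : ∀ L : ℕ, 1 ≤ L → f (L + 1) ≤ f L := by
    intro L hL
    rw [key L hL, key (L + 1) (by omega)]
    have hmm : 2 * S * L - 1 ≤ 2 * S * (L + 1) - 1 := by
      have : 2 * S * L ≤ 2 * S * (L + 1) := by nlinarith
      omega
    have h1 : 1 ≤ 2 * S * L - 1 := by
      have := hSL L hL
      have h2 : 2 * S * L = 2 * (S * L) := by ring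
      have h3 : 1 ≤ S * L := Nat.one_le_iff_ne_zero.2 (by positivity)
      omega
    have hp : (0:ℝ) < (1 + c / ((2 * S * L - 1 : ℕ) : ℝ)) ^ (2 * S * L - 1) := by positivity
    exact inv_anti₀ hp (mono_aux c hc h1 hmm)
  -- part 2: tendsto
  have hm_tendsto : Tendsto (fun L : ℕ => 2 * S * L - 1) atTop atTop := by
    have hb : ∀ L : ℕ, L ≤ 2 * S * L - 1 := by
      intro L
      have : 2 * 1 * L ≤ 2 * S * L := Nat.mul_le_mul_right _ (by omega)
      omega
    exact tendsto_atTop_mono hb tendsto_id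
  have g_tendsto : Tendsto (fun m : ℕ => ((1 + c / (m : ℝ)) ^ m)⁻¹) atTop
      (nhds (Real.exp (-c))) := by
    rw [Real.exp_neg]
    exact (Real.tendsto_one_add_div_pow_exp c).inv₀ (Real.exp_ne_zero c)
  have part2 : Tendsto f atTop (nhds (Real.exp (-c))) := by
    apply (g_tendsto.comp hm_tendsto).congr'
    filter_upwards [eventually_ge_atTop 1] with L hL
    exact (key L hL).symm
  -- part 3
  have part3 : ∀ L : ℕ, 1 ≤ L → Real.exp (-c) ≤ f L := by
    intro L hL
    apply le_of_tendsto part2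
    filter_upwards [eventually_ge_atTop L] with L' hL'
    induction L', hL' using Nat.le_induction with
    | base => exact le_rfl
    | succ n hn ih => exact (part1 n (hL.trans hn)).trans ih
  have hfL1 : ∀ L : ℕ,
      ((2 * (S : ℝ) * ((L : ℝ) + 1) - 1) / ((S : ℝ) * (2 * ((L : ℝ) + 1) + 1))) ^
        (2 * S * (L + 1) - 1) = f (L + 1) := by
    intro L
    rw [hf]
    push_cast
    ring_nf
  exact ⟨fun L hL => (hfL1 L) ▸ part1 L hL, part2, part3⟩
end
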